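/- Under the hypotheses of Theorem 1 (φ differentiable with sup_{t≥t₀} ‖φ̇(t)‖∞ ≤ φ̇_max, β ≥ (n √n / λ₂(L)) φ̇_max + 1, z differentiable with ż(t) = −β sgn{(Bᵀ ⊗ I_r) x(t)}, x(t) = (B ⊗ I_r) z(t) + φ(t), x̃(t) = x(t) − 1ₙ ⊗ φ̄(t)), the Lyapunov function V(t) = (1/2) ‖x̃(t)‖₂² satisfies the differential inequality V̇(t) ≤ −‖(Bᵀ ⊗ I_r) x̃(t)‖₁ ≤ −√(2 λ₂(L)) · √(V(t)) for all t ≥ t₀. -/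

import Mathlib

open Matrix Finset
open scoped Kronecker

/-- The second-smallest eigenvalue (algebraic connectivity, `λ₂`) of a Hermitian matrix,
obtained by sorting its eigenvalues in nondecreasing order. -/
noncomputable def lambda2 {n : ℕ} [NeZero n] {L : Matrix (Fin n) (Fin n) ℝ}
    (hL : L.IsHermitian) : ℝ :=
  hL.eigenvalues (Tuple.sort hL.eigenvalues 1)

/-- The incidence matrix of a simple graph in which every undirected edge is regarded as two
oppositely oriented directed edges (darts): entry `(i, d)` is `1` if dart `d` enters vertex
`i`, `-1` if `d` leaves `i`, and `0` otherwise. -/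
def dartIncMatrix {n : ℕ} (G : SimpleGraph (Fin n)) [DecidableRel G.Adj] :
    Matrix (Fin n) G.Dart ℝ :=
  Matrix.of fun i d => if d.toProd.2 = i then 1 else if d.toProd.1 = i then -1 else 0

/-! The derivative of `V` is `⟨x̃, (B ⊗ I)ż⟩ + ⟨x̃, φ̇⟩`; the contribution of `φ̄̇` vanishes because
every column of `x̃` sums to zero. The columns of `B` also sum to zero, so
`(Bᵀ ⊗ I) x = (Bᵀ ⊗ I) x̃` and the first term is exactly `-β ‖(Bᵀ ⊗ I) x̃‖₁`.
Each column `v` of `x̃` is orthogonal to the eigenvector of the (simple, as `G` is connected)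
eigenvalue `0` of `L`, so expanding in an eigenbasis gives
`2 λ₂ ‖v‖₂² ≤ 2 vᵀ L v = ‖Bᵀ v‖₂² ≤ ‖Bᵀ v‖₁²`. This yields the second inequality, and together
with `‖v‖₁ ≤ √n ‖v‖₂` and `λ₂ ≤ tr L ≤ n²` it bounds `⟨x̃, φ̇⟩` by `(β - 1) ‖(Bᵀ ⊗ I) x̃‖₁`. -/

namespace Tuple

variable {n : ℕ} [NeZero n] {α : Type*} [LinearOrder α]

lemma apply_sort_zero_le (f : Fin n → α) (j : Fin n) : f (sort f 0) ≤ f j := by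
  simpa using monotone_sort f (Fin.zero_le ((sort f).symm j))

lemma apply_sort_one_le (f : Fin n → α) {j : Fin n} (hj : j ≠ sort f 0) :
    f (sort f 1) ≤ f j := by
  have hk : (sort f).symm j ≠ 0 := fun h => hj (by rw [← h, Equiv.apply_symm_apply])
  simpa using monotone_sort f (Fin.one_le_of_ne_zero hk)

end Tuple

lemma OrthonormalBasis.sum_dotProduct_mul_dotProduct {ι κ : Type*} [Fintype ι] [Fintype κ]
    (b : OrthonormalBasis κ ℝ (EuclideanSpace ℝ ι)) (x y : ι → ℝ) :
    ∑ j, (⇑(b j) ⬝ᵥ x) * (⇑(b j) ⬝ᵥ y) = x ⬝ᵥ y := by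
  simpa [EuclideanSpace.inner_eq_star_dotProduct, dotProduct_comm, mul_comm] using
    b.sum_inner_mul_inner (WithLp.toLp 2 x) (WithLp.toLp 2 y)

namespace Matrix.IsHermitian

variable {ι : Type*} [Fintype ι] [DecidableEq ι] {A : Matrix ι ι ℝ}

lemma dotProduct_mulVec_eq_sum_eigenvalues (hA : A.IsHermitian) (v : ι → ℝ) :
    v ⬝ᵥ A *ᵥ v = ∑ j, hA.eigenvalues j * (⇑(hA.eigenvectorBasis j) ⬝ᵥ v) ^ 2 := by
  rw [← hA.eigenvectorBasis.sum_dotProduct_mul_dotProduct]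
  refine sum_congr rfl fun j _ => ?_
  rw [dotProduct_mulVec, ← mulVec_transpose, (isHermitian_iff_isSymm.mp hA).eq,
    hA.mulVec_eigenvectorBasis, smul_dotProduct, smul_eq_mul]
  ring

lemma mul_dotProduct_self_le (hA : A.IsHermitian) {c : ℝ} (v : ι → ℝ)
    (hv : ∀ j, hA.eigenvalues j < c → ⇑(hA.eigenvectorBasis j) ⬝ᵥ v = 0) :
    c * (v ⬝ᵥ v) ≤ v ⬝ᵥ A *ᵥ v := by
  rw [← hA.eigenvectorBasis.sum_dotProduct_mul_dotProduct,
    hA.dotProduct_mulVec_eq_sum_eigenvalues, mul_sum]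
  refine sum_le_sum fun j _ => ?_
  rcases lt_or_ge (hA.eigenvalues j) c with hj | hj
  · simp [hv j hj]
  · nlinarith [sq_nonneg (⇑(hA.eigenvectorBasis j) ⬝ᵥ v)]

end Matrix.IsHermitian

lemma lambda2_le_trace {n : ℕ} [NeZero n] {A : Matrix (Fin n) (Fin n) ℝ} (hA : A.PosSemidef) :
    lambda2 hA.isHermitian ≤ A.trace := by
  rw [hA.isHermitian.trace_eq_sum_eigenvalues]
  exact single_le_sum (fun j _ => hA.eigenvalues_nonneg j) (mem_univ _)

lemma dotProduct_self_le_sq_sum_abs {ι : Type*} [Fintype ι] (w : ι → ℝ) :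
    w ⬝ᵥ w ≤ (∑ i, |w i|) ^ 2 := by
  simpa [dotProduct, sq_abs, ← sq] using
    sum_sq_le_sq_sum_of_nonneg (s := univ) (f := fun i => |w i|) fun i _ => abs_nonneg _

lemma Real.self_mul_sign (r : ℝ) : r * Real.sign r = |r| := by
  rcases lt_trichotomy r 0 with h | rfl | h
  · simp [Real.sign_of_neg h, abs_of_neg h]
  · simp
  · simp [Real.sign_of_pos h, abs_of_pos h]

lemma dotProduct_mul_sign {ι : Type*} [Fintype ι] (w : ι → ℝ) (c : ℝ) :
    w ⬝ᵥ (fun e => c * Real.sign (w e)) = c * ∑ e, |w e| := by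
  simp only [dotProduct, mul_sum, ← Real.self_mul_sign]
  exact sum_congr rfl fun e _ => by ring

lemma kronecker_one_mulVec_apply {α β κ R : Type*} [Fintype β] [Fintype κ] [DecidableEq κ]
    [CommSemiring R] (M : Matrix α β R) (X : β × κ → R) (i : α) (k : κ) :
    ((M ⊗ₖ (1 : Matrix κ κ R)) *ᵥ X) (i, k) = (M *ᵥ fun j => X (j, k)) i := by
  simp only [mulVec, dotProduct, Fintype.sum_prod_type, kroneckerMap_apply, one_apply]
  refine sum_congr rfl fun j _ => ?_
  simp

lemma dotProduct_comp_snd_eq_zero {α κ R : Type*} [Fintype α] [Fintype κ] [CommSemiring R]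
    {X : α × κ → R} (hX : ∀ k, ∑ i, X (i, k) = 0) (c : κ → R) :
    X ⬝ᵥ (fun p => c p.2) = 0 := by
  simp [dotProduct, Fintype.sum_prod_type_right, ← sum_mul, hX]

lemma HasDerivAt.const_mulVec {m ι : Type*} [Fintype m] [Fintype ι] (M : Matrix m ι ℝ)
    {f : ℝ → ι → ℝ} {f' : ι → ℝ} {t : ℝ} (hf : HasDerivAt f f' t) :
    HasDerivAt (fun s => M *ᵥ f s) (M *ᵥ f') t :=
  hasDerivAt_pi.2 fun i => HasDerivAt.fun_sum fun j _ => (hasDerivAt_pi.1 hf j).const_mul (M i j)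

lemma HasDerivAt.half_sum_sq {ι : Type*} [Fintype ι] {f : ℝ → ι → ℝ} {f' : ι → ℝ} {t : ℝ}
    (hf : HasDerivAt f f' t) :
    HasDerivAt (fun s => (1 / 2 : ℝ) * ∑ i, f s i ^ 2) (f t ⬝ᵥ f') t := by
  refine ((HasDerivAt.fun_sum (u := univ) fun i _ =>
    (hasDerivAt_pi.1 hf i).fun_pow 2).const_mul (1 / 2 : ℝ)).congr_deriv ?_
  simp only [dotProduct, mul_sum]
  exact sum_congr rfl fun i _ => by push_cast; ring

lemma HasDerivAt.const_mul_sum_fst {α κ : Type*} [Fintype α] {f : ℝ → α × κ → ℝ}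
    {f' : α × κ → ℝ} {t : ℝ} (hf : HasDerivAt f f' t) (c : ℝ) :
    HasDerivAt (fun s (p : α × κ) => c * ∑ i, f s (i, p.2)) (fun p => c * ∑ i, f' (i, p.2)) t :=
  hasDerivAt_pi.2 fun p =>
    (HasDerivAt.fun_sum fun i _ => hasDerivAt_pi.1 hf (i, p.2)).const_mul c

namespace SimpleGraph

section

variable {V : Type*} [Fintype V] (G : SimpleGraph V) [DecidableRel G.Adj]

lemma sum_darts {R : Type*} [AddCommMonoid R] (f : V → V → R) :
    ∑ d : G.Dart, f d.fst d.snd = ∑ i, ∑ j, if G.Adj i j then f i j else 0 := by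
  rw [← Fintype.sum_prod_type' (fun i j => if G.Adj i j then f i j else 0), ← sum_filter]
  exact sum_bij' (fun d _ => d.toProd) (fun p hp => ⟨p, (mem_filter.mp hp).2⟩)
    (fun d _ => by simp [d.adj]) (fun _ _ => mem_univ _) (fun _ _ => rfl) (fun _ _ => rfl)
    (fun _ _ => rfl)

variable [DecidableEq V]

lemma trace_lapMatrix : (G.lapMatrix ℝ).trace = ∑ v, (G.degree v : ℝ) := by
  simp [lapMatrix, degMatrix, trace_sub, trace_adjMatrix]

lemma card_eigenvalues_lapMatrix_eq_zero (hconn : G.Connected) :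
    Fintype.card {i // (G.posSemidef_lapMatrix ℝ).isHermitian.eigenvalues i = 0} = 1 := by
  have hcomp : Fintype.card G.ConnectedComponent = 1 := by
    have := hconn.preconnected.subsingleton_connectedComponent
    exact Fintype.card_eq_one_iff.mpr
      ⟨G.connectedComponentMk hconn.nonempty.some, fun _ => Subsingleton.elim _ _⟩
  have hnullity := LinearMap.finrank_range_add_finrank_ker (toLin' (G.lapMatrix ℝ))
  rw [← G.card_connectedComponent_eq_finrank_ker_toLin'_lapMatrix, hcomp, toLin'_apply',
    ← Matrix.rank, (G.posSemidef_lapMatrix ℝ).isHermitian.rank_eq_card_non_zero_eigs,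
    Fintype.card_subtype_compl, Module.finrank_fintype_fun_eq_card] at hnullity
  have := Fintype.card_subtype_le
    fun i => (G.posSemidef_lapMatrix ℝ).isHermitian.eigenvalues i = 0
  omega

lemma eigenvectorBasis_lapMatrix_apply_eq (hconn : G.Connected) {j : V}
    (hj : (G.posSemidef_lapMatrix ℝ).isHermitian.eigenvalues j = 0) (a b : V) :
    (G.posSemidef_lapMatrix ℝ).isHermitian.eigenvectorBasis j a =
      (G.posSemidef_lapMatrix ℝ).isHermitian.eigenvectorBasis j b := by
  have hker := (G.posSemidef_lapMatrix ℝ).isHermitian.mulVec_eigenvectorBasis j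
  rw [hj, zero_smul, lapMatrix_mulVec_eq_zero_iff_forall_reachable] at hker
  exact hker a b (hconn.preconnected a b)

end

variable {n : ℕ} [NeZero n] (G : SimpleGraph (Fin n)) [DecidableRel G.Adj]

lemma eigenvalues_lapMatrix_sort_zero (hconn : G.Connected) :
    (G.posSemidef_lapMatrix ℝ).isHermitian.eigenvalues
      (Tuple.sort (G.posSemidef_lapMatrix ℝ).isHermitian.eigenvalues 0) = 0 := by
  obtain ⟨⟨j, hj⟩⟩ :=
    Fintype.card_pos_iff.mp (G.card_eigenvalues_lapMatrix_eq_zero hconn ▸ one_pos)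
  exact le_antisymm (hj ▸ Tuple.apply_sort_zero_le _ j)
    ((G.posSemidef_lapMatrix ℝ).eigenvalues_nonneg _)

lemma lambda2_lapMatrix_pos (hn : 2 ≤ n) (hconn : G.Connected) :
    0 < lambda2 (G.posSemidef_lapMatrix ℝ).isHermitian := by
  refine ((G.posSemidef_lapMatrix ℝ).eigenvalues_nonneg _).lt_of_ne fun h => ?_
  have hne : (0 : Fin n) ≠ 1 := by
    rw [Ne, Fin.ext_iff, Fin.val_zero, Fin.val_one', Nat.mod_eq_of_lt hn]
    omega
  have := Fintype.card_le_one_iff.mp (G.card_eigenvalues_lapMatrix_eq_zero hconn).le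
    ⟨_, G.eigenvalues_lapMatrix_sort_zero hconn⟩ ⟨_, h.symm⟩
  exact hne ((Tuple.sort _).injective (congrArg Subtype.val this))

lemma lambda2_lapMatrix_le : lambda2 (G.posSemidef_lapMatrix ℝ).isHermitian ≤ n ^ 2 := by
  refine (lambda2_le_trace (G.posSemidef_lapMatrix ℝ)).trans ?_
  calc (G.lapMatrix ℝ).trace = ∑ v, (G.degree v : ℝ) := G.trace_lapMatrix
    _ ≤ ∑ _v : Fin n, (n : ℝ) := sum_le_sum fun v _ => by
      exact_mod_cast (Fintype.card_fin n) ▸ (G.degree_lt_card_verts v).le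
    _ = n ^ 2 := by simp [sq]

lemma lambda2_mul_dotProduct_self_le (hconn : G.Connected) (v : Fin n → ℝ)
    (hv : ∑ i, v i = 0) :
    lambda2 (G.posSemidef_lapMatrix ℝ).isHermitian * (v ⬝ᵥ v) ≤ v ⬝ᵥ G.lapMatrix ℝ *ᵥ v := by
  refine (G.posSemidef_lapMatrix ℝ).isHermitian.mul_dotProduct_self_le v fun j hj => ?_
  have hj0 : j = Tuple.sort (G.posSemidef_lapMatrix ℝ).isHermitian.eigenvalues 0 := by
    by_contra h
    exact (Tuple.apply_sort_one_le _ h).not_gt hj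
  have hconst := G.eigenvectorBasis_lapMatrix_apply_eq hconn
    (hj0 ▸ G.eigenvalues_lapMatrix_sort_zero hconn)
  simp only [dotProduct, hconst _ 0, ← mul_sum, hv, mul_zero]

end SimpleGraph

section dartIncMatrix

variable {n : ℕ} (G : SimpleGraph (Fin n)) [DecidableRel G.Adj]

lemma dartIncMatrix_transpose_mulVec_apply (v : Fin n → ℝ) (d : G.Dart) :
    ((dartIncMatrix G)ᵀ *ᵥ v) d = v d.snd - v d.fst := by
  rw [mulVec, dotProduct, Fintype.sum_eq_add d.snd d.fst d.adj.ne.symm]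
  · simp [dartIncMatrix, d.adj.ne.symm, sub_eq_add_neg]
  · intro i hi
    simp [dartIncMatrix, Ne.symm hi.1, Ne.symm hi.2]

lemma dartIncMatrix_transpose_mulVec_const (c : ℝ) :
    (dartIncMatrix G)ᵀ *ᵥ (fun _ => c) = 0 := by
  ext d
  simp [dartIncMatrix_transpose_mulVec_apply]

lemma sum_dartIncMatrix_mulVec (z : G.Dart → ℝ) : ∑ i, (dartIncMatrix G *ᵥ z) i = 0 := by
  have h := dotProduct_mulVec (fun _ => (1 : ℝ)) (dartIncMatrix G) z
  rw [← mulVec_transpose, dartIncMatrix_transpose_mulVec_const, zero_dotProduct] at h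
  simpa [dotProduct] using h

lemma dotProduct_self_dartIncMatrix_transpose_mulVec (v : Fin n → ℝ) :
    (dartIncMatrix G)ᵀ *ᵥ v ⬝ᵥ (dartIncMatrix G)ᵀ *ᵥ v = 2 * (v ⬝ᵥ G.lapMatrix ℝ *ᵥ v) := by
  have hquad := G.lapMatrix_toLinearMap₂' ℝ v
  rw [toLinearMap₂'_apply'] at hquad
  have hsq (d : G.Dart) :
      (v d.snd - v d.fst) * (v d.snd - v d.fst) = (v d.fst - v d.snd) ^ 2 := by
    ring
  rw [hquad, dotProduct]
  simp only [dartIncMatrix_transpose_mulVec_apply, hsq]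
  rw [G.sum_darts fun a b => (v a - v b) ^ 2]
  ring

variable {κ : Type*} [Fintype κ] [DecidableEq κ]

lemma sum_dartIncMatrix_kronecker_mulVec (z : G.Dart × κ → ℝ) (k : κ) :
    ∑ i, ((dartIncMatrix G ⊗ₖ (1 : Matrix κ κ ℝ)) *ᵥ z) (i, k) = 0 := by
  simp only [kronecker_one_mulVec_apply, sum_dartIncMatrix_mulVec]

lemma dartIncMatrix_transpose_kronecker_mulVec_comp_snd (c : κ → ℝ) :
    ((dartIncMatrix G)ᵀ ⊗ₖ (1 : Matrix κ κ ℝ)) *ᵥ (fun p => c p.2) = 0 := by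
  ext ⟨d, k⟩
  simp only [kronecker_one_mulVec_apply, dartIncMatrix_transpose_mulVec_const, Pi.zero_apply]

variable [NeZero n]

lemma sum_dartIncMatrix_kronecker_mulVec_add_sub_mean (z : G.Dart × κ → ℝ)
    (φ : Fin n × κ → ℝ) (k : κ) :
    ∑ i, ((dartIncMatrix G ⊗ₖ (1 : Matrix κ κ ℝ)) *ᵥ z + φ -
      fun p : Fin n × κ => (n : ℝ)⁻¹ * ∑ j, φ (j, p.2)) (i, k) = 0 := by
  simp only [Pi.sub_apply, Pi.add_apply, sum_sub_distrib, sum_add_distrib,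
    sum_dartIncMatrix_kronecker_mulVec, sum_const, card_univ, Fintype.card_fin, nsmul_eq_mul,
    mul_inv_cancel_left₀ (Nat.cast_ne_zero.mpr (NeZero.ne n) : (n : ℝ) ≠ 0), zero_add, sub_self]

lemma two_mul_lambda2_mul_dotProduct_self_le (hconn : G.Connected) (v : Fin n → ℝ)
    (hv : ∑ i, v i = 0) :
    2 * lambda2 (G.posSemidef_lapMatrix ℝ).isHermitian * (v ⬝ᵥ v) ≤
      (dartIncMatrix G)ᵀ *ᵥ v ⬝ᵥ (dartIncMatrix G)ᵀ *ᵥ v := by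
  rw [dotProduct_self_dartIncMatrix_transpose_mulVec, mul_assoc]
  exact mul_le_mul_of_nonneg_left (G.lambda2_mul_dotProduct_self_le hconn v hv) zero_le_two

lemma sum_abs_le_mul_sum_abs_dartIncMatrix_transpose_mulVec (hn : 2 ≤ n) (hconn : G.Connected)
    (v : Fin n → ℝ) (hv : ∑ i, v i = 0) :
    ∑ i, |v i| ≤
      n * √n / lambda2 (G.posSemidef_lapMatrix ℝ).isHermitian *
        ∑ d, |((dartIncMatrix G)ᵀ *ᵥ v) d| := by
  set l := lambda2 (G.posSemidef_lapMatrix ℝ).isHermitian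
  set S := ∑ d, |((dartIncMatrix G)ᵀ *ᵥ v) d|
  have hl : 0 < l := G.lambda2_lapMatrix_pos hn hconn
  have hln : l ≤ n ^ 2 := G.lambda2_lapMatrix_le
  have hn0 : (0 : ℝ) ≤ n := n.cast_nonneg
  have hcs : (∑ i, |v i|) ^ 2 ≤ n * (v ⬝ᵥ v) := by
    simpa [dotProduct, sq_abs, ← sq] using
      sq_sum_le_card_mul_sum_sq (s := univ) (f := fun i => |v i|)
  have hgap : 2 * l * (v ⬝ᵥ v) ≤ S ^ 2 :=
    (two_mul_lambda2_mul_dotProduct_self_le G hconn v hv).trans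
      (dotProduct_self_le_sq_sum_abs _)
  have hsq : l ^ 2 * (∑ i, |v i|) ^ 2 ≤ n ^ 3 * S ^ 2 :=
    calc l ^ 2 * (∑ i, |v i|) ^ 2 ≤ l ^ 2 * (n * (v ⬝ᵥ v)) := by gcongr
      _ = l * n / 2 * (2 * l * (v ⬝ᵥ v)) := by ring
      _ ≤ l * n / 2 * S ^ 2 := by gcongr
      _ ≤ n ^ 3 * S ^ 2 := by gcongr; nlinarith
  refine (pow_le_pow_iff_left₀ (by positivity) (by positivity) two_ne_zero).mp ?_
  rw [mul_pow, div_pow, mul_pow, Real.sq_sqrt hn0, div_mul_eq_mul_div,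
    le_div_iff₀' (by positivity)]
  linarith

lemma two_mul_lambda2_mul_dotProduct_self_le_kronecker (hconn : G.Connected)
    {X : Fin n × κ → ℝ} (hX : ∀ k, ∑ i, X (i, k) = 0) :
    2 * lambda2 (G.posSemidef_lapMatrix ℝ).isHermitian * (X ⬝ᵥ X) ≤
      ((dartIncMatrix G)ᵀ ⊗ₖ (1 : Matrix κ κ ℝ)) *ᵥ X ⬝ᵥ
        ((dartIncMatrix G)ᵀ ⊗ₖ (1 : Matrix κ κ ℝ)) *ᵥ X := by
  simp only [dotProduct, Fintype.sum_prod_type_right, mul_sum, kronecker_one_mulVec_apply]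
  exact sum_le_sum fun k _ => by
    simpa only [dotProduct, mul_sum] using
      two_mul_lambda2_mul_dotProduct_self_le G hconn _ (hX k)

lemma sqrt_two_mul_lambda2_mul_sqrt_le_sum_abs_kronecker (hn : 2 ≤ n) (hconn : G.Connected)
    {X : Fin n × κ → ℝ} (hX : ∀ k, ∑ i, X (i, k) = 0) :
    √(2 * lambda2 (G.posSemidef_lapMatrix ℝ).isHermitian) * √(1 / 2 * (X ⬝ᵥ X)) ≤
      ∑ e, |(((dartIncMatrix G)ᵀ ⊗ₖ (1 : Matrix κ κ ℝ)) *ᵥ X) e| := by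
  have hl := G.lambda2_lapMatrix_pos hn hconn
  have hX0 : 0 ≤ X ⬝ᵥ X := sum_nonneg fun p _ => mul_self_nonneg _
  rw [← Real.sqrt_mul (by positivity), Real.sqrt_le_left (sum_nonneg fun e _ => abs_nonneg _)]
  nlinarith [two_mul_lambda2_mul_dotProduct_self_le_kronecker G hconn hX,
    dotProduct_self_le_sq_sum_abs (((dartIncMatrix G)ᵀ ⊗ₖ (1 : Matrix κ κ ℝ)) *ᵥ X)]

lemma dotProduct_le_mul_sum_abs_kronecker (hn : 2 ≤ n) (hconn : G.Connected)
    {X : Fin n × κ → ℝ} (hX : ∀ k, ∑ i, X (i, k) = 0)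
    {ψ : Fin n × κ → ℝ} {a : ℝ} (hψ : ∀ p, |ψ p| ≤ a) :
    X ⬝ᵥ ψ ≤ n * √n / lambda2 (G.posSemidef_lapMatrix ℝ).isHermitian * a *
      ∑ e, |(((dartIncMatrix G)ᵀ ⊗ₖ (1 : Matrix κ κ ℝ)) *ᵥ X) e| := by
  simp only [dotProduct, Fintype.sum_prod_type_right, mul_sum, kronecker_one_mulVec_apply]
  refine sum_le_sum fun k _ => ?_
  have ha : 0 ≤ a := (abs_nonneg _).trans (hψ (0, k))
  calc ∑ i, X (i, k) * ψ (i, k) ≤ ∑ i, a * |X (i, k)| := sum_le_sum fun i _ => by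
        rw [mul_comm a]
        exact (le_abs_self _).trans
          (abs_mul (X (i, k)) _ ▸ mul_le_mul_of_nonneg_left (hψ _) (abs_nonneg _))
    _ = a * ∑ i, |X (i, k)| := (mul_sum _ _ _).symm
    _ ≤ a * (n * √n / lambda2 (G.posSemidef_lapMatrix ℝ).isHermitian *
          ∑ d, |((dartIncMatrix G)ᵀ *ᵥ fun i => X (i, k)) d|) := by
        gcongr
        exact sum_abs_le_mul_sum_abs_dartIncMatrix_transpose_mulVec G hn hconn _ (hX k)
    _ = _ := by rw [mul_sum, mul_sum]; exact sum_congr rfl fun d _ => by ring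

end dartIncMatrix

theorem statement_13_general (n : ℕ) (hn : 2 ≤ n) [NeZero n]
    (G : SimpleGraph (Fin n)) [DecidableRel G.Adj] (hconn : G.Connected)
    (r : ℕ) (t₀ : ℝ)
    (φ φ' : ℝ → (Fin n × Fin r → ℝ))
    (hφ : ∀ t, t₀ ≤ t → HasDerivAt φ (φ' t) t)
    (φdotmax : ℝ) (hφmax : ∀ t, t₀ ≤ t → ∀ p, |φ' t p| ≤ φdotmax)
    (β : ℝ)
    (hβ : (n : ℝ) * Real.sqrt n / lambda2 (G.posSemidef_lapMatrix ℝ).isHermitian * φdotmax + 1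
            ≤ β)
    (z : ℝ → (G.Dart × Fin r → ℝ))
    (x : ℝ → (Fin n × Fin r → ℝ))
    (hx : ∀ t, x t = (dartIncMatrix G ⊗ₖ (1 : Matrix (Fin r) (Fin r) ℝ)).mulVec (z t) + φ t)
    (hz : ∀ t, t₀ ≤ t → HasDerivAt z
      (fun e => -β * Real.sign
        ((((dartIncMatrix G)ᵀ ⊗ₖ (1 : Matrix (Fin r) (Fin r) ℝ)).mulVec (x t)) e)) t)
    (φbar : ℝ → (Fin r → ℝ)) (hφbar : ∀ t k, φbar t k = (n : ℝ)⁻¹ * ∑ i, φ t (i, k))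
    (xt : ℝ → (Fin n × Fin r → ℝ)) (hxt : ∀ t p, xt t p = x t p - φbar t p.2)
    (V : ℝ → ℝ) (hV : ∀ t, V t = (1 / 2 : ℝ) * ∑ p, (xt t p) ^ 2) :
    ∀ t, t₀ ≤ t → ∃ V' : ℝ,
      HasDerivAt V V' t ∧
      V' ≤ -(∑ e, |(((dartIncMatrix G)ᵀ ⊗ₖ (1 : Matrix (Fin r) (Fin r) ℝ)).mulVec (xt t)) e|) ∧
      -(∑ e, |(((dartIncMatrix G)ᵀ ⊗ₖ (1 : Matrix (Fin r) (Fin r) ℝ)).mulVec (xt t)) e|) ≤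
        -(Real.sqrt (2 * lambda2 (G.posSemidef_lapMatrix ℝ).isHermitian) *
          Real.sqrt (V t)) := by
  intro t ht
  set M := dartIncMatrix G ⊗ₖ (1 : Matrix (Fin r) (Fin r) ℝ)
  set Mt := (dartIncMatrix G)ᵀ ⊗ₖ (1 : Matrix (Fin r) (Fin r) ℝ)
  have hxt_eq : xt = (fun s => M *ᵥ z s) + φ - fun s p => (n : ℝ)⁻¹ * ∑ i, φ s (i, p.2) := by
    funext s p
    simp [hxt, hx, hφbar]
  have hcol (k : Fin r) : ∑ i, xt t (i, k) = 0 := by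
    rw [hxt_eq]
    exact sum_dartIncMatrix_kronecker_mulVec_add_sub_mean G (z t) (φ t) k
  have hW : Mt *ᵥ x t = Mt *ᵥ xt t := by
    have : x t = xt t + fun p => φbar t p.2 := by funext p; simp [hxt]
    rw [this, mulVec_add, dartIncMatrix_transpose_kronecker_mulVec_comp_snd, add_zero]
  have hV' := ((((hz t ht).const_mulVec M).add (hφ t ht)).sub
    ((hφ t ht).const_mul_sum_fst (n : ℝ)⁻¹)).half_sum_sq
  rw [← hxt_eq, ← funext hV] at hV'
  refine ⟨_, hV', ?_, neg_le_neg ?_⟩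
  · have hdrift := dotProduct_le_mul_sum_abs_kronecker G hn hconn hcol (hφmax t ht)
    have hS : 0 ≤ ∑ e, |(Mt *ᵥ xt t) e| := sum_nonneg fun e _ => abs_nonneg _
    rw [dotProduct_sub, dotProduct_add,
      dotProduct_comp_snd_eq_zero hcol (fun k => (n : ℝ)⁻¹ * ∑ i, φ' t (i, k)),
      dotProduct_mulVec, ← mulVec_transpose, ← kroneckerMap_transpose, transpose_one, hW,
      dotProduct_mul_sign]
    linarith [mul_le_mul_of_nonneg_right hβ hS]
  · simpa [hV, dotProduct, sq] using
      sqrt_two_mul_lambda2_mul_sqrt_le_sum_abs_kronecker G hn hconn hcol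

/-- **Lyapunov differential inequality for Theorem 1.** Under the hypotheses of Theorem 1,
the Lyapunov function `V(t) = (1/2) ‖x̃(t)‖₂²` is differentiable on `[t₀, ∞)` and its
derivative satisfies `V̇(t) ≤ -‖(Bᵀ ⊗ I_r) x̃(t)‖₁ ≤ -√(2 λ₂(L)) √(V(t))`. -/
theorem statement_13 (n : ℕ) (hn : 2 ≤ n) [NeZero n]
    (G : SimpleGraph (Fin n)) [DecidableRel G.Adj] (hconn : G.Connected)
    (r : ℕ) (hr : 1 ≤ r) (t₀ : ℝ)
    (φ φ' : ℝ → (Fin n × Fin r → ℝ))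
    (hφ : ∀ t, t₀ ≤ t → HasDerivAt φ (φ' t) t)
    (φdotmax : ℝ) (hφmax : ∀ t, t₀ ≤ t → ∀ p, |φ' t p| ≤ φdotmax)
    (β : ℝ)
    (hβ : (n : ℝ) * Real.sqrt n / lambda2 (G.posSemidef_lapMatrix ℝ).isHermitian * φdotmax + 1
            ≤ β)
    (z : ℝ → (G.Dart × Fin r → ℝ))
    (x : ℝ → (Fin n × Fin r → ℝ))
    (hx : ∀ t, x t = (dartIncMatrix G ⊗ₖ (1 : Matrix (Fin r) (Fin r) ℝ)).mulVec (z t) + φ t)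
    (hz : ∀ t, t₀ ≤ t → HasDerivAt z
      (fun e => -β * Real.sign
        ((((dartIncMatrix G)ᵀ ⊗ₖ (1 : Matrix (Fin r) (Fin r) ℝ)).mulVec (x t)) e)) t)
    (φbar : ℝ → (Fin r → ℝ)) (hφbar : ∀ t k, φbar t k = (n : ℝ)⁻¹ * ∑ i, φ t (i, k))
    (xt : ℝ → (Fin n × Fin r → ℝ)) (hxt : ∀ t p, xt t p = x t p - φbar t p.2)
    (V : ℝ → ℝ) (hV : ∀ t, V t = (1 / 2 : ℝ) * ∑ p, (xt t p) ^ 2) :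
    ∀ t, t₀ ≤ t → ∃ V' : ℝ,
      HasDerivAt V V' t ∧
      V' ≤ -(∑ e, |(((dartIncMatrix G)ᵀ ⊗ₖ (1 : Matrix (Fin r) (Fin r) ℝ)).mulVec (xt t)) e|) ∧
      -(∑ e, |(((dartIncMatrix G)ᵀ ⊗ₖ (1 : Matrix (Fin r) (Fin r) ℝ)).mulVec (xt t)) e|) ≤
        -(Real.sqrt (2 * lambda2 (G.posSemidef_lapMatrix ℝ).isHermitian) *
          Real.sqrt (V t)) :=
  statement_13_general n hn G hconn r t₀ φ φ' hφ φdotmax hφmax β hβ z x hx hz φbar hφbar xt hxt V hV
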